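/- arXiv:0911.1222 — 3 statements merged into one kernel-verified Lean document; each statement's English description precedes it below -/
import Mathlib

section
/- Let R = ℂ⟦x,y⟧ with a local degree monomial ordering >. If I ⊆ R is an ideal with leading ideal L_>(I) = ⟨x², x·y², y³⟩ or L_>(I) = ⟨x², x·y, y²⟩, then I is not a complete intersection (cannot be generated by two elements forming a regular sequence). -/
/- STATEMENT 1: In R = ℂ⟦x,y⟧ with a local degree ordering, if the leading
ideal of I is ⟨x², xy², y³⟩ or ⟨x², xy, y²⟩, then I is not a complete
intersection.  Having leading ideal J (w.r.t. a local degree ordering) is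
encoded by its characterizing property used in the proof: the Hilbert–Samuel
functions of R/I and R/J coincide. -/

noncomputable section

abbrev R2 : Type := MvPowerSeries (Fin 2) ℂ

noncomputable def Xv : R2 := MvPowerSeries.X 0
noncomputable def Yv : R2 := MvPowerSeries.X 1

/-- the maximal ideal ⟨x,y⟩ of ℂ⟦x,y⟧ -/
noncomputable def mR2 : Ideal R2 := Ideal.span {Xv, Yv}

/-!
In both cases `dim R/(I + m²) = 3 = dim R/m²`, so `I ⊆ m²`, and `I` then needs three generators.
Modulo `m^n`, the ideal generated by `u ∈ m^a` is spanned over `ℂ` by the products of `u` with the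
monomials of degree `< n - a`. For `⟨x², xy, y²⟩` the image of `I = (g, h)` in `R/m³` must have
dimension `6 - 3 = 3`, but it is spanned by `g` and `h`. For `⟨x², xy², y³⟩` the image in `R/m³`
has dimension `6 - 5 = 1`, so after a change of generators `I = (u, v)` with `u ∈ m²`, `v ∈ m³`;
the image in `R/m⁴` must then have dimension `10 - 5 = 5`, but it is spanned by `u, xu, yu, v`.
The Hilbert–Samuel function of a monomial ideal counts the monomials outside it (its staircase).
-/

open Module

section QuotientRank

variable {k A : Type*} [Field k] [CommRing A] [Algebra k A]

theorem finrank_quotient_sup_add_finrank_map (I L : Ideal A) [Module.Finite k (A ⧸ L)] :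
    finrank k (A ⧸ (I ⊔ L)) + finrank k ((I.map (Ideal.Quotient.mk L)).restrictScalars k) =
      finrank k (A ⧸ L) := by
  have e : ((A ⧸ L) ⧸ (I.map (Ideal.Quotient.mk L)).restrictScalars k) ≃ₗ[k] A ⧸ (I ⊔ L) :=
    Submodule.Quotient.restrictScalarsEquiv k _ ≪≫ₗ
      (sup_comm L I ▸ DoubleQuot.quotQuotEquivQuotSupₐ k L I).toLinearEquiv
  rw [← e.finrank_eq]
  exact Submodule.finrank_quotient_add_finrank _

theorem le_of_finrank_quotient_sup_eq {I L : Ideal A} [Module.Finite k (A ⧸ L)]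
    (h : finrank k (A ⧸ (I ⊔ L)) = finrank k (A ⧸ L)) : I ≤ L := by
  have hsum := finrank_quotient_sup_add_finrank_map (k := k) I L
  have hmap : (I.map (Ideal.Quotient.mk L)).restrictScalars k = ⊥ :=
    Submodule.finrank_eq_zero.mp (by omega)
  intro x hx
  rw [← Ideal.Quotient.eq_zero_iff_mem, ← Submodule.mem_bot k, ← hmap]
  exact Ideal.mem_map_of_mem _ hx

theorem exists_span_pair_eq_of_finrank_map_le_one {M L : Ideal A} [Module.Finite k (A ⧸ L)]
    {g h : A} (hg : g ∈ M) (hh : h ∈ M)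
    (hrank : finrank k (((Ideal.span {g, h}).map (Ideal.Quotient.mk L)).restrictScalars k) ≤ 1) :
    ∃ u v, Ideal.span {g, h} = Ideal.span {u, v} ∧ u ∈ M ∧ v ∈ L := by
  by_cases hgL : g ∈ L
  · exact ⟨h, g, Ideal.span_pair_comm, hh, hgL⟩
  set V := ((Ideal.span {g, h}).map (Ideal.Quotient.mk L)).restrictScalars k
  have hmem {x} (hx : x ∈ ({g, h} : Set A)) : Ideal.Quotient.mkₐ k L x ∈ V :=
    Ideal.mem_map_of_mem _ (Ideal.subset_span hx)
  have hg0 : Ideal.Quotient.mkₐ k L g ≠ 0 := by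
    rwa [Ideal.Quotient.mkₐ_eq_mk, Ne, Ideal.Quotient.eq_zero_iff_mem]
  have hV : k ∙ Ideal.Quotient.mkₐ k L g = V :=
    Submodule.eq_of_le_of_finrank_le
      ((Submodule.span_singleton_le_iff_mem _ _).mpr (hmem (by simp)))
      (hrank.trans (finrank_span_singleton hg0).ge)
  obtain ⟨c, hc⟩ := Submodule.mem_span_singleton.mp (hV ▸ hmem (x := h) (by simp))
  refine ⟨g, h - c • g, ?_, hg, ?_⟩
  · rw [Algebra.smul_def, sub_eq_add_neg, ← neg_mul, mul_comm _ g, Ideal.span_pair_add_left_mul]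
  · rw [← Ideal.Quotient.eq_zero_iff_mem, ← Ideal.Quotient.mkₐ_eq_mk k, map_sub, map_smul, hc,
      sub_self]

end QuotientRank

namespace MvPowerSeries

variable {σ : Type*}

theorem range_truncFinset {R : Type*} [CommSemiring R] (T : Finset (σ →₀ ℕ)) :
    LinearMap.range (truncFinset R T) = MvPolynomial.restrictSupport R T := by
  ext p
  refine ⟨?_, fun hp => ⟨p, (truncFinset_coe_eq_self_iff p).mpr hp⟩⟩
  rintro ⟨f, rfl⟩
  exact support_truncFinset_subset f

variable {k : Type*} [Field k]

def quotientEquivRestrictSupport {K : Ideal (MvPowerSeries σ k)}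
    {T : Finset (σ →₀ ℕ)} (hK : ∀ f, f ∈ K ↔ ∀ d ∈ T, coeff d f = 0) :
    (MvPowerSeries σ k ⧸ K) ≃ₗ[k] MvPolynomial.restrictSupport k (T : Set (σ →₀ ℕ)) :=
  have hker : K.restrictScalars k = LinearMap.ker (truncFinset k T) := by
    classical
    ext f
    simp only [Submodule.restrictScalars_mem, hK, LinearMap.mem_ker, MvPolynomial.ext_iff,
      coeff_truncFinset, MvPolynomial.coeff_zero]
    exact ⟨fun h d => by split_ifs with hd <;> simp [h d, hd],
      fun h d hd => by simpa [hd] using h d⟩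
  (Submodule.Quotient.restrictScalarsEquiv k K).symm ≪≫ₗ Submodule.quotEquivOfEq _ _ hker ≪≫ₗ
    (truncFinset k T).quotKerEquivRange ≪≫ₗ LinearEquiv.ofEq _ _ (range_truncFinset T)

theorem finite_quotient_of_forall_mem_iff {K : Ideal (MvPowerSeries σ k)}
    {T : Finset (σ →₀ ℕ)} (hK : ∀ f, f ∈ K ↔ ∀ d ∈ T, coeff d f = 0) :
    Module.Finite k (MvPowerSeries σ k ⧸ K) :=
  have := Module.Finite.of_basis (MvPolynomial.basisRestrictSupport k (T : Set (σ →₀ ℕ)))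
  Module.Finite.equiv (quotientEquivRestrictSupport hK).symm

theorem finrank_quotient_of_forall_mem_iff {K : Ideal (MvPowerSeries σ k)}
    {T : Finset (σ →₀ ℕ)} (hK : ∀ f, f ∈ K ↔ ∀ d ∈ T, coeff d f = 0) :
    finrank k (MvPowerSeries σ k ⧸ K) = T.card := by
  rw [(quotientEquivRestrictSupport hK).finrank_eq,
    finrank_eq_card_basis (MvPolynomial.basisRestrictSupport k _)]
  simp

end MvPowerSeries

open MvPowerSeries Finsupp

def pairExp (p : ℕ × ℕ) : Fin 2 →₀ ℕ := single 0 p.1 + single 1 p.2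

@[simp] theorem pairExp_apply_zero (p : ℕ × ℕ) : pairExp p 0 = p.1 := by simp [pairExp]

@[simp] theorem pairExp_apply_one (p : ℕ × ℕ) : pairExp p 1 = p.2 := by simp [pairExp]

theorem pairExp_apply_pair (d : Fin 2 →₀ ℕ) : pairExp (d 0, d 1) = d := by
  ext i; fin_cases i <;> simp

theorem pairExp_injective : Function.Injective pairExp := fun p q h =>
  Prod.ext (by simpa using congr($h 0)) (by simpa using congr($h 1))

theorem pairExp_le_pairExp_iff {p q : ℕ × ℕ} :
    pairExp p ≤ pairExp q ↔ p.1 ≤ q.1 ∧ p.2 ≤ q.2 := by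
  simp [Finsupp.le_def, Fin.forall_fin_two]

theorem degree_eq_apply_zero_add_apply_one (d : Fin 2 →₀ ℕ) : degree d = d 0 + d 1 := by
  simp [degree_eq_sum, Fin.sum_univ_two]

theorem degree_pairExp (p : ℕ × ℕ) : degree (pairExp p) = p.1 + p.2 := by
  simp [degree_eq_apply_zero_add_apply_one]

theorem Xv_pow_mul_Yv_pow (p : ℕ × ℕ) : Xv ^ p.1 * Yv ^ p.2 = monomial (pairExp p) 1 := by
  rw [Xv, Yv, X_pow_eq, X_pow_eq, monomial_mul_monomial, one_mul, pairExp]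

theorem exists_eq_Xv_mul_add_Yv_mul {f : R2} {n : ℕ} (hf : ((n + 1 : ℕ) : ℕ∞) ≤ f.order) :
    ∃ f₀ f₁ : R2, f = Xv * f₀ + Yv * f₁ ∧ (n : ℕ∞) ≤ f₀.order ∧ (n : ℕ∞) ≤ f₁.order := by
  have hcoeff {d : Fin 2 →₀ ℕ} (hd : degree d < n + 1) : coeff d f = 0 :=
    coeff_of_lt_order (lt_of_lt_of_le (by exact_mod_cast hd) hf)
  -- `f₀` collects the monomials divisible by `x`, `f₁` the remaining ones, all divisible by `y`
  let f₀ : R2 := fun d => coeff (d + single 0 1) f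
  let f₁ : R2 := fun d => if d 0 = 0 then coeff (d + single 1 1) f else 0
  refine ⟨f₀, f₁, ?_, nat_le_order fun d hd => hcoeff ?_, nat_le_order fun d hd => ?_⟩
  · ext d
    have hf₀ (e) : coeff e f₀ = coeff (e + single 0 1) f := rfl
    have hf₁ (e : Fin 2 →₀ ℕ) :
        coeff e f₁ = if e 0 = 0 then coeff (e + single 1 1) f else 0 := rfl
    rw [map_add, Xv, Yv, X_def, X_def, coeff_monomial_mul, coeff_monomial_mul, hf₀, hf₁]
    by_cases h0 : d 0 = 0 <;> by_cases h1 : d 1 = 0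
    · have : d = 0 := by ext i; fin_cases i <;> simp [h0, h1]
      subst this
      simp [hcoeff]
    all_goals simp [Finsupp.single_le_iff, h0, h1, Nat.one_le_iff_ne_zero, tsub_add_cancel_of_le]
  · simpa using hd
  · show ite _ _ _ = 0
    split_ifs
    · exact hcoeff (by simpa using hd)
    · rfl

theorem mem_mR2_pow_iff {n : ℕ} {f : R2} : f ∈ mR2 ^ n ↔ (n : ℕ∞) ≤ f.order := by
  induction n generalizing f with
  | zero => simp
  | succ n ih =>
    constructor
    · intro hf
      rw [pow_succ] at hf
      refine Submodule.mul_induction_on hf (fun a ha b hb => ?_) fun a b ha hb => ?_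
      · have hb1 : 1 ≤ b.order := by
          rw [one_le_order_iff_constCoeff_eq_zero, ← RingHom.mem_ker]
          refine (Ideal.span_le.mpr ?_) hb
          rintro _ (rfl | rfl) <;> exact constantCoeff_X _
        push_cast
        exact (add_le_add (ih.mp ha) hb1).trans le_order_mul
      · exact le_min ha hb |>.trans min_order_le_add
    · intro hf
      obtain ⟨f₀, f₁, rfl, h₀, h₁⟩ := exists_eq_Xv_mul_add_Yv_mul hf
      rw [pow_succ']
      exact add_mem (Ideal.mul_mem_mul (Ideal.subset_span (by simp)) (ih.mpr h₀))
        (Ideal.mul_mem_mul (Ideal.subset_span (by simp)) (ih.mpr h₁))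

theorem coeff_eq_zero_of_mem_mR2_pow {n : ℕ} {f : R2} (hf : f ∈ mR2 ^ n) {d : Fin 2 →₀ ℕ}
    (hd : degree d < n) : coeff d f = 0 :=
  coeff_of_lt_order ((Nat.cast_lt.mpr hd).trans_le (mem_mR2_pow_iff.mp hf))

def monomialIdeal (G : Finset (ℕ × ℕ)) : Ideal R2 :=
  Ideal.span ((fun p : ℕ × ℕ => Xv ^ p.1 * Yv ^ p.2) '' G)

def staircase (G : Finset (ℕ × ℕ)) (n : ℕ) : Finset (ℕ × ℕ) :=
  (Finset.range n ×ˢ Finset.range n).filter fun p : ℕ × ℕ =>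
    p.1 + p.2 < n ∧ ∀ q ∈ G, ¬(q.1 ≤ p.1 ∧ q.2 ≤ p.2)

theorem mem_staircase {G : Finset (ℕ × ℕ)} {n : ℕ} {p : ℕ × ℕ} :
    p ∈ staircase G n ↔ p.1 + p.2 < n ∧ ∀ q ∈ G, ¬(q.1 ≤ p.1 ∧ q.2 ≤ p.2) := by
  simp only [staircase, Finset.mem_filter, Finset.mem_product, Finset.mem_range,
    and_iff_right_iff_imp]
  omega

theorem sub_sum_monomial_mem_mR2_pow (f : R2) (n : ℕ) :
    f - ∑ p ∈ staircase ∅ n, coeff (pairExp p) f • (Xv ^ p.1 * Yv ^ p.2) ∈ mR2 ^ n := by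
  refine mem_mR2_pow_iff.mpr (nat_le_order fun d hd => ?_)
  have hmem : (d 0, d 1) ∈ staircase ∅ n := by
    simpa [mem_staircase, degree_eq_apply_zero_add_apply_one] using hd
  rw [map_sub, map_sum, Finset.sum_eq_single_of_mem _ hmem, sub_eq_zero]
  · rw [Xv_pow_mul_Yv_pow, map_smul, pairExp_apply_pair, coeff_monomial_same, smul_eq_mul,
      mul_one]
  · intro p _ hp
    rw [Xv_pow_mul_Yv_pow, map_smul, coeff_monomial, if_neg, smul_zero]
    rintro rfl
    exact hp (pairExp_injective (pairExp_apply_pair _)).symm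

theorem coeff_eq_zero_of_mem_monomialIdeal {G : Finset (ℕ × ℕ)} {f : R2}
    (hf : f ∈ monomialIdeal G) {d : Fin 2 →₀ ℕ} (hd : ∀ q ∈ G, ¬pairExp q ≤ d) :
    coeff d f = 0 := by
  induction hf using Submodule.span_induction generalizing d with
  | mem x hx =>
    obtain ⟨q, hq, rfl⟩ := hx
    dsimp only
    rw [Xv_pow_mul_Yv_pow, coeff_monomial, if_neg]
    rintro rfl
    exact hd q hq le_rfl
  | zero => simp
  | add x y _ _ hx hy => simp [hx hd, hy hd]
  | smul a x _ hx =>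
    rw [smul_eq_mul, coeff_mul]
    refine Finset.sum_eq_zero fun e he => ?_
    have he₂ : e.2 ≤ d := Finset.HasAntidiagonal.mem_antidiagonal.mp he ▸ le_add_self
    rw [hx fun q hq hle => hd q hq (hle.trans he₂), mul_zero]

theorem mem_monomialIdeal_sup_mR2_pow_iff {G : Finset (ℕ × ℕ)} {n : ℕ} {f : R2} :
    f ∈ monomialIdeal G ⊔ mR2 ^ n ↔ ∀ d ∈ (staircase G n).image pairExp, coeff d f = 0 := by
  rw [Finset.forall_mem_image]
  constructor
  · rintro hf p hp
    obtain ⟨hpn, hpG⟩ := mem_staircase.mp hp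
    obtain ⟨a, ha, b, hb, rfl⟩ := Submodule.mem_sup.mp hf
    rw [map_add, coeff_eq_zero_of_mem_monomialIdeal ha
      fun q hq hle => hpG q hq (pairExp_le_pairExp_iff.mp hle),
      coeff_eq_zero_of_mem_mR2_pow hb (by rwa [degree_pairExp]), add_zero]
  · intro hf
    rw [← sub_add_cancel f (∑ p ∈ staircase ∅ n, coeff (pairExp p) f • (Xv ^ p.1 * Yv ^ p.2))]
    refine add_mem (Ideal.mem_sup_right (sub_sum_monomial_mem_mR2_pow f n))
      (Ideal.mem_sup_left (Ideal.sum_mem _ fun p hp => ?_))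
    by_cases hpG : ∀ q ∈ G, ¬(q.1 ≤ p.1 ∧ q.2 ≤ p.2)
    · rw [hf (mem_staircase.mpr ⟨(mem_staircase.mp hp).1, hpG⟩), zero_smul]
      exact zero_mem _
    · push Not at hpG
      obtain ⟨q, hq, h₁, h₂⟩ := hpG
      have hdvd : Xv ^ p.1 * Yv ^ p.2 =
          Xv ^ (p.1 - q.1) * Yv ^ (p.2 - q.2) * (Xv ^ q.1 * Yv ^ q.2) := by
        rw [← pow_sub_mul_pow Xv h₁, ← pow_sub_mul_pow Yv h₂]
        ring
      rw [hdvd]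
      exact Submodule.smul_of_tower_mem _ _
        (Ideal.mul_mem_left _ _ (Ideal.subset_span ⟨q, hq, rfl⟩))

theorem finrank_quotient_monomialIdeal_sup (G : Finset (ℕ × ℕ)) (n : ℕ) :
    finrank ℂ (R2 ⧸ (monomialIdeal G ⊔ mR2 ^ n)) = (staircase G n).card := by
  rw [finrank_quotient_of_forall_mem_iff fun f => mem_monomialIdeal_sup_mR2_pow_iff,
    Finset.card_image_of_injective _ pairExp_injective]

theorem mem_mR2_pow_iff_coeff {n : ℕ} {f : R2} :
    f ∈ mR2 ^ n ↔ ∀ d ∈ (staircase ∅ n).image pairExp, coeff d f = 0 := by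
  rw [← mem_monomialIdeal_sup_mR2_pow_iff, monomialIdeal, Finset.coe_empty, Set.image_empty,
    Ideal.span_empty, bot_sup_eq]

instance (n : ℕ) : Module.Finite ℂ (R2 ⧸ mR2 ^ n) :=
  finite_quotient_of_forall_mem_iff fun _ => mem_mR2_pow_iff_coeff

theorem finrank_quotient_mR2_pow (n : ℕ) :
    finrank ℂ (R2 ⧸ mR2 ^ n) = (staircase ∅ n).card := by
  rw [finrank_quotient_of_forall_mem_iff fun f => mem_mR2_pow_iff_coeff,
    Finset.card_image_of_injective _ pairExp_injective]

theorem mk_mul_mem_span_of_mem_mR2_pow {u : R2} {k n : ℕ} (hu : u ∈ mR2 ^ k) (a : R2) :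
    Ideal.Quotient.mk (mR2 ^ n) (a * u) ∈ Submodule.span ℂ
      ((fun p : ℕ × ℕ => Ideal.Quotient.mk (mR2 ^ n) (Xv ^ p.1 * Yv ^ p.2 * u)) ''
        staircase ∅ (n - k)) := by
  set s := ∑ p ∈ staircase ∅ (n - k), coeff (pairExp p) a • (Xv ^ p.1 * Yv ^ p.2)
  have hrem : a * u - s * u ∈ mR2 ^ n := by
    rw [← sub_mul]
    refine Ideal.pow_le_pow_right (by omega : n ≤ n - k + k) ?_
    rw [pow_add]
    exact Ideal.mul_mem_mul (sub_sum_monomial_mem_mR2_pow a (n - k)) hu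
  rw [Ideal.Quotient.eq.mpr hrem, Finset.sum_mul, map_sum]
  refine Submodule.sum_mem _ fun p hp => ?_
  rw [smul_mul_assoc, ← Ideal.Quotient.mkₐ_eq_mk ℂ, map_smul, Ideal.Quotient.mkₐ_eq_mk]
  exact Submodule.smul_mem _ _ (Submodule.subset_span (Set.mem_image_of_mem _ hp))

theorem finrank_map_span_singleton_le {u : R2} {k : ℕ} (hu : u ∈ mR2 ^ k) (n : ℕ) :
    finrank ℂ (((Ideal.span {u}).map (Ideal.Quotient.mk (mR2 ^ n))).restrictScalars ℂ) ≤
      (staircase ∅ (n - k)).card := by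
  classical
  set f := fun p : ℕ × ℕ => Ideal.Quotient.mk (mR2 ^ n) (Xv ^ p.1 * Yv ^ p.2 * u)
  have hle : ((Ideal.span {u}).map (Ideal.Quotient.mk (mR2 ^ n))).restrictScalars ℂ ≤
      Submodule.span ℂ ((staircase ∅ (n - k)).image f) := by
    rw [Finset.coe_image]
    intro x hx
    obtain ⟨y, hy, rfl⟩ := (Ideal.mem_map_iff_of_surjective _ Ideal.Quotient.mk_surjective).mp hx
    obtain ⟨a, rfl⟩ := Ideal.mem_span_singleton'.mp hy
    exact mk_mul_mem_span_of_mem_mR2_pow hu a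
  exact (Submodule.finrank_mono hle).trans
    ((finrank_span_finset_le_card _).trans Finset.card_image_le)

theorem card_staircase_le_finrank_quotient_span_pair_sup {g h : R2} {a b : ℕ}
    (hg : g ∈ mR2 ^ a) (hh : h ∈ mR2 ^ b) (n : ℕ) :
    (staircase ∅ n).card ≤ finrank ℂ (R2 ⧸ (Ideal.span {g, h} ⊔ mR2 ^ n)) +
      (staircase ∅ (n - a)).card + (staircase ∅ (n - b)).card := by
  have hsum := finrank_quotient_sup_add_finrank_map (k := ℂ) (Ideal.span {g, h}) (mR2 ^ n)
  have himage :
      finrank ℂ (((Ideal.span {g, h}).map (Ideal.Quotient.mk (mR2 ^ n))).restrictScalars ℂ) ≤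
        (staircase ∅ (n - a)).card + (staircase ∅ (n - b)).card := by
    rw [Ideal.span_insert, Ideal.map_sup, Submodule.restrictScalars_sup]
    exact (Submodule.finrank_add_le_finrank_add_finrank _ _).trans
      (add_le_add (finrank_map_span_singleton_le hg n) (finrank_map_span_singleton_le hh n))
  rw [finrank_quotient_mR2_pow] at hsum
  omega

theorem span_Xv_sq_Xv_mul_Yv_sq_Yv_cube :
    Ideal.span {Xv ^ 2, Xv * Yv ^ 2, Yv ^ 3} = monomialIdeal {(2, 0), (1, 2), (0, 3)} := by
  simp [monomialIdeal, Set.image_insert_eq]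

theorem span_Xv_sq_Xv_mul_Yv_Yv_sq :
    Ideal.span {Xv ^ 2, Xv * Yv, Yv ^ 2} = monomialIdeal {(2, 0), (1, 1), (0, 2)} := by
  simp [monomialIdeal, Set.image_insert_eq]

theorem finrank_quotient_span_pair_sup_mR2_cube_ne_three {g h : R2}
    (hle : Ideal.span {g, h} ≤ mR2 ^ 2) : finrank ℂ (R2 ⧸ (Ideal.span {g, h} ⊔ mR2 ^ 3)) ≠ 3 := by
  have hbound := card_staircase_le_finrank_quotient_span_pair_sup
    (hle (Ideal.subset_span (Set.mem_insert g {h})))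
    (hle (Ideal.subset_span (Set.mem_insert_of_mem g rfl))) 3
  have hcard : (staircase ∅ 3).card = 6 ∧ (staircase ∅ (3 - 2)).card = 1 := by decide
  omega

theorem finrank_quotient_span_pair_sup_mR2_pow_four_ne_five {g h : R2}
    (hle : Ideal.span {g, h} ≤ mR2 ^ 2)
    (h3 : finrank ℂ (R2 ⧸ (Ideal.span {g, h} ⊔ mR2 ^ 3)) = 5) :
    finrank ℂ (R2 ⧸ (Ideal.span {g, h} ⊔ mR2 ^ 4)) ≠ 5 := by
  have hsum := finrank_quotient_sup_add_finrank_map (k := ℂ) (Ideal.span {g, h}) (mR2 ^ 3)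
  rw [h3, finrank_quotient_mR2_pow, show (staircase ∅ 3).card = 6 by decide] at hsum
  obtain ⟨u, v, huv, hu, hv⟩ :=
    exists_span_pair_eq_of_finrank_map_le_one (k := ℂ) (L := mR2 ^ 3)
    (hle (Ideal.subset_span (Set.mem_insert g {h})))
    (hle (Ideal.subset_span (Set.mem_insert_of_mem g rfl))) (by omega)
  rw [huv]
  have hbound := card_staircase_le_finrank_quotient_span_pair_sup hu hv 4
  have hcard : (staircase ∅ 4).card = 10 ∧ (staircase ∅ (4 - 2)).card = 3 ∧
      (staircase ∅ (4 - 3)).card = 1 := by decide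
  omega

theorem statement1 (I J : Ideal R2)
    (hJ : J = Ideal.span {Xv ^ 2, Xv * Yv ^ 2, Yv ^ 3} ∨
          J = Ideal.span {Xv ^ 2, Xv * Yv, Yv ^ 2})
    (hLeading : ∀ n : ℕ,
      Module.finrank ℂ (R2 ⧸ (I ⊔ mR2 ^ n)) =
      Module.finrank ℂ (R2 ⧸ (J ⊔ mR2 ^ n))) :
    ¬ ∃ g h : R2, I = Ideal.span {g, h} ∧
        RingTheory.Sequence.IsRegular R2 [g, h] := by
  rintro ⟨g, h, rfl, -⟩
  rcases hJ with rfl | rfl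
  · have hHS (n : ℕ) : finrank ℂ (R2 ⧸ (Ideal.span {g, h} ⊔ mR2 ^ n)) =
        (staircase {(2, 0), (1, 2), (0, 3)} n).card := by
      rw [hLeading, span_Xv_sq_Xv_mul_Yv_sq_Yv_cube, finrank_quotient_monomialIdeal_sup]
    have hle := le_of_finrank_quotient_sup_eq (k := ℂ)
      ((hHS 2).trans (by rw [finrank_quotient_mR2_pow]; decide))
    exact finrank_quotient_span_pair_sup_mR2_pow_four_ne_five hle ((hHS 3).trans (by decide))
      ((hHS 4).trans (by decide))
  · have hHS (n : ℕ) : finrank ℂ (R2 ⧸ (Ideal.span {g, h} ⊔ mR2 ^ n)) =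
        (staircase {(2, 0), (1, 1), (0, 2)} n).card := by
      rw [hLeading, span_Xv_sq_Xv_mul_Yv_Yv_sq, finrank_quotient_monomialIdeal_sup]
    have hle := le_of_finrank_quotient_sup_eq (k := ℂ)
      ((hHS 2).trans (by rw [finrank_quotient_mR2_pow]; decide))
    exact finrank_quotient_span_pair_sup_mR2_cube_ne_three hle ((hHS 3).trans (by decide))

end
end

section
/- Let f ∈ ℂ⟦x,y⟧ have 3-jet equal to x³ − y³, and let I be an ideal containing ∂f/∂x, ∂f/∂y and ⟨x,y⟩³ with dim_ℂ(R/I) ≥ 3, generated by two elements. Then I = ⟨x², y²⟩ (in suitable coordinates), and in particular the colength of I is exactly 4. -/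
/- STATEMENT 3: Let f ∈ ℂ⟦x,y⟧ with jet₃(f) = x³ − y³ (i.e. f − (x³−y³) ∈ ⟨x,y⟩⁴),
and let I be an ideal generated by two elements containing ∂f/∂x, ∂f/∂y and
⟨x,y⟩³ with dim_ℂ(R/I) ≥ 3.  Then (in suitable coordinates) I = ⟨x², y²⟩, and
in particular the colength of I is exactly 4. -/

noncomputable section

/-- formal partial derivative of a power series in two variables -/
noncomputable def pd (i : Fin 2) (f : R2) : R2 :=
  fun m => ((m i : ℂ) + 1) * MvPowerSeries.coeff (m + Finsupp.single i 1) f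

/-! The partials of `f` are `3x²` and `-3y²` modulo `⟨x,y⟩³ ⊆ I`, so `J = ⟨x², y²⟩ ⊆ I`, and
`R ⧸ J` has basis `1, x, y, xy`. An element of `I` with nonzero constant term makes `I = R`; one
with a nonzero linear part `bx + cy` gives, after multiplication by `y` and `x`, `xy ∈ I` and then
`bx + cy ∈ I`, so `dim R ⧸ I ≤ 2`. Hence both generators `g, h` have order `≥ 2`. If one of them had a
nonzero `xy`-coefficient, then `x², xy, y² ∈ (g, h)`; but the degree-2 parts of elements of `(g, h)`
are combinations of those of `g` and `h`, a space of dimension `≤ 2`. So `g, h ∈ J` and `I = J`. -/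

open MvPowerSeries Finsupp

namespace MvPowerSeries

variable {σ R : Type*}

theorem exists_eq_monomial_mul_add_monomial_mul [Semiring R] {a b : σ →₀ ℕ}
    {f : MvPowerSeries σ R} (hf : ∀ m, coeff m f ≠ 0 → a ≤ m ∨ b ≤ m) :
    ∃ g h : MvPowerSeries σ R, f = monomial a 1 * g + monomial b 1 * h ∧
      (∀ d, coeff d g = coeff (d + a) f) ∧
      (∀ d, coeff d h = 0 ∨ coeff d h = coeff (d + b) f) := by
  classical
  let g : MvPowerSeries σ R := fun d => coeff (d + a) f
  let h : MvPowerSeries σ R := fun d => if a ≤ d + b then 0 else coeff (d + b) f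
  have hg : ∀ d, coeff d g = coeff (d + a) f := fun d => rfl
  have hh : ∀ d, coeff d h = if a ≤ d + b then 0 else coeff (d + b) f := fun d => rfl
  refine ⟨g, h, ?_, hg, fun d => by rw [hh]; split_ifs <;> simp⟩
  ext m
  rw [map_add, coeff_monomial_mul, coeff_monomial_mul, hg, hh]
  by_cases ha : a ≤ m <;> by_cases hb : b ≤ m <;>
    simp [ha, hb, tsub_add_cancel_of_le]
  by_contra hm
  exact (hf m hm).elim ha hb

theorem le_order_pderiv [CommSemiring R] {f : MvPowerSeries σ R} {n : ℕ} (i : σ)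
    (hf : (n + 1 : ℕ∞) ≤ f.order) : n ≤ (pderiv R i f).order := by
  refine le_order fun d hd => ?_
  rw [coeff_pderiv, coeff_of_lt_order, zero_mul]
  simp only [map_add, degree_single]
  push_cast
  exact lt_of_lt_of_le (by simpa using hd) hf

theorem constantCoeff_eq_zero_of_mem_of_ne_top {K : Type*} [Field K]
    {I : Ideal (MvPowerSeries σ K)} (hI : I ≠ ⊤) {v : MvPowerSeries σ K} (hv : v ∈ I) :
    constantCoeff v = 0 := by
  by_contra h
  exact hI (I.eq_top_of_isUnit_mem hv (isUnit_iff_constantCoeff.mpr (isUnit_iff_ne_zero.mpr h)))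

theorem homogeneousComponent_zero [Semiring R] (f : MvPowerSeries σ R) :
    homogeneousComponent 0 f = C (constantCoeff f) := by
  classical
  ext d
  simp only [coeff_homogeneousComponent, coeff_C, degree_eq_zero_iff]
  split_ifs with h <;> simp [h]

theorem homogeneousComponent_monomial_of_degree_eq [Semiring R] {d : σ →₀ ℕ} {n : ℕ}
    (r : R) (hd : degree d = n) : homogeneousComponent n (monomial d r) = monomial d r := by
  classical
  ext e
  rw [coeff_homogeneousComponent, coeff_monomial]
  split_ifs <;> simp_all

theorem homogeneousComponent_mul_of_le_order_right [CommSemiring R] (p : MvPowerSeries σ R)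
    {f : MvPowerSeries σ R} {n : ℕ} (hf : n ≤ f.order) :
    homogeneousComponent n (p * f) = constantCoeff p • homogeneousComponent n f := by
  have h := homogeneousComponent_mul_of_le_order (f := p) (p := 0) bot_le hf
  rwa [zero_add, homogeneousComponent_zero, ← smul_eq_C_mul] at h

theorem homogeneousComponent_mem_span_of_mem_span_pair [CommSemiring R]
    {g h u : MvPowerSeries σ R} {n : ℕ} (hg : n ≤ g.order) (hh : n ≤ h.order)
    (hu : u ∈ Ideal.span {g, h}) :
    homogeneousComponent n u ∈
      Submodule.span R {homogeneousComponent n g, homogeneousComponent n h} := by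
  obtain ⟨p, q, rfl⟩ := Ideal.mem_span_pair.mp hu
  rw [map_add, homogeneousComponent_mul_of_le_order_right p hg,
    homogeneousComponent_mul_of_le_order_right q hh]
  exact add_mem (Submodule.smul_mem _ _ (Submodule.subset_span (by simp)))
    (Submodule.smul_mem _ _ (Submodule.subset_span (by simp)))

end MvPowerSeries

lemma finrank_le_two_of_span_eq_top {K V : Type*} [Field K] [AddCommGroup V] [Module K V]
    {u v w : V} (hspan : Submodule.span K (Set.range ![u, v, w]) = ⊤) {b c : K} (hbc : b ≠ 0 ∨ c ≠ 0)
    (hrel : b • v + c • w = 0) : Module.finrank K V ≤ 2 := by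
  have hdep : ¬ LinearIndependent K ![u, v, w] := by
    rw [Fintype.not_linearIndependent_iff]
    refine ⟨![0, b, c], by simpa [Fin.sum_univ_three] using hrel, ?_⟩
    rcases hbc with hb | hc
    exacts [⟨1, hb⟩, ⟨2, hc⟩]
  have hlt := lt_of_le_of_ne (finrank_range_le_card ![u, v, w])
    (mt linearIndependent_iff_card_eq_finrank_span.mpr hdep ∘ Eq.symm)
  rw [Set.finrank, hspan, finrank_top] at hlt
  simpa using Nat.lt_succ_iff.mp hlt

def bideg (a b : ℕ) : Fin 2 →₀ ℕ := single 0 a + single 1 b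

@[simp] lemma bideg_apply_zero (a b : ℕ) : bideg a b 0 = a := by simp [bideg]
@[simp] lemma bideg_apply_one (a b : ℕ) : bideg a b 1 = b := by simp [bideg]

lemma bideg_eta (m : Fin 2 →₀ ℕ) : bideg (m 0) (m 1) = m := by
  ext i; fin_cases i <;> simp

lemma bideg_inj {a b c d : ℕ} : bideg a b = bideg c d ↔ a = c ∧ b = d := by
  refine ⟨fun h => ⟨?_, ?_⟩, fun h => h.1 ▸ h.2 ▸ rfl⟩
  · simpa using DFunLike.congr_fun h 0
  · simpa using DFunLike.congr_fun h 1

lemma bideg_le_iff {a b : ℕ} {m : Fin 2 →₀ ℕ} : bideg a b ≤ m ↔ a ≤ m 0 ∧ b ≤ m 1 := by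
  simp [Finsupp.le_def, Fin.forall_fin_two]

lemma degree_fin_two (m : Fin 2 →₀ ℕ) : degree m = m 0 + m 1 := by
  rw [degree_eq_sum, Fin.sum_univ_two]

lemma monomial_bideg (a b : ℕ) (c : ℂ) :
    (monomial (bideg a b) c : R2) = C c * (Xv ^ a * Yv ^ b) := by
  rw [Xv, Yv, X_pow_eq, X_pow_eq, monomial_mul_monomial, mul_one, ← smul_eq_C_mul,
    ← map_smul, smul_eq_mul, mul_one, bideg]

lemma coeff_bideg_monomial_bideg (a b c d : ℕ) (r : ℂ) :
    coeff (bideg a b) (monomial (bideg c d) r : R2) = if a = c ∧ b = d then r else 0 := by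
  classical
  simp only [coeff_monomial, bideg_inj]

lemma mR2_le_ker_constantCoeff : mR2 ≤ RingHom.ker (constantCoeff : R2 →+* ℂ) := by
  rw [mR2, Ideal.span_le]
  rintro x (rfl | rfl) <;> simp [Xv, Yv]

lemma le_order_of_mem_mR2_pow {n : ℕ} {f : R2} (hf : f ∈ mR2 ^ n) : (n : ℕ∞) ≤ f.order := by
  induction n generalizing f with
  | zero => simp
  | succ n ih =>
    rw [pow_succ] at hf
    refine Submodule.mul_induction_on hf (fun a ha b hb => ?_) (fun a b ha hb => ?_)
    · have hb1 : 1 ≤ b.order :=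
        (one_le_order_iff_constCoeff_eq_zero).mpr (mR2_le_ker_constantCoeff hb)
      push_cast
      exact (add_le_add (ih ha) hb1).trans le_order_mul
    · exact (le_min ha hb).trans min_order_le_add

lemma mem_mR2_pow_of_le_order {n : ℕ} {f : R2} (hf : (n : ℕ∞) ≤ f.order) : f ∈ mR2 ^ n := by
  induction n generalizing f with
  | zero => simp
  | succ n ih =>
    have hsupp : ∀ m, coeff m f ≠ 0 → single 0 1 ≤ m ∨ single 1 1 ≤ m := by
      intro m hm
      have hm0 : m ≠ 0 := by
        rintro rfl
        exact hm (coeff_of_lt_order (lt_of_lt_of_le (by simp) hf))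
      simp only [single_le_iff, Nat.one_le_iff_ne_zero, ← not_and_or]
      exact fun h => hm0 (by ext i; fin_cases i <;> simp [h.1, h.2])
    obtain ⟨g, h, hfgh, hg, hh⟩ := exists_eq_monomial_mul_add_monomial_mul hsupp
    have shift : ∀ (i : Fin 2) (d : Fin 2 →₀ ℕ), ((degree d : ℕ) : ℕ∞) < n →
        coeff (d + single i 1) f = 0 := fun i d hd =>
      coeff_of_lt_order (lt_of_lt_of_le (by simpa using hd) hf)
    rw [hfgh, pow_succ']
    exact add_mem (Submodule.mul_mem_mul (Ideal.subset_span (Or.inl rfl))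
      (ih (le_order fun d hd => (hg d).trans (shift 0 d hd))))
      (Submodule.mul_mem_mul (Ideal.subset_span (Or.inr rfl))
      (ih (le_order fun d hd => (hh d).elim id fun e => e.trans (shift 1 d hd))))

lemma pd_eq_pderiv (i : Fin 2) (f : R2) : pd i f = pderiv ℂ i f := by
  ext m
  rw [coeff_pderiv, mul_comm]
  rfl

lemma pderiv_zero_cubic : pderiv ℂ 0 (Xv ^ 3 - Yv ^ 3) = 3 * Xv ^ 2 := by
  simp [Xv, Yv]

lemma pderiv_one_cubic : pderiv ℂ 1 (Xv ^ 3 - Yv ^ 3) = -3 * Yv ^ 2 := by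
  simp [Xv, Yv]

lemma isUnit_three : IsUnit (3 : R2) := by
  rw [isUnit_iff_constantCoeff, map_ofNat]
  norm_num

lemma X_sq_mem_and_Y_sq_mem {f : R2} {I : Ideal R2} (hjet : f - (Xv ^ 3 - Yv ^ 3) ∈ mR2 ^ 4)
    (hdx : pd 0 f ∈ I) (hdy : pd 1 f ∈ I) (hm3 : mR2 ^ 3 ≤ I) :
    Xv ^ 2 ∈ I ∧ Yv ^ 2 ∈ I := by
  have hr := le_order_of_mem_mR2_pow hjet
  have hder : ∀ i, pderiv ℂ i (f - (Xv ^ 3 - Yv ^ 3)) ∈ I := fun i =>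
    hm3 (mem_mR2_pow_of_le_order (le_order_pderiv i hr))
  have hfx := sub_mem hdx (hder 0)
  have hfy := sub_mem hdy (hder 1)
  rw [pd_eq_pderiv, ← map_sub, sub_sub_cancel, pderiv_zero_cubic] at hfx
  rw [pd_eq_pderiv, ← map_sub, sub_sub_cancel, pderiv_one_cubic, neg_mul, neg_mem_iff] at hfy
  exact ⟨(Ideal.unit_mul_mem_iff_mem I isUnit_three).mp hfx,
    (Ideal.unit_mul_mem_iff_mem I isUnit_three).mp hfy⟩

local notation "𝔧" => (Ideal.span {Xv ^ 2, Yv ^ 2} : Ideal R2)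

-- the coordinates of `R2 ⧸ 𝔧` in its basis `1, x, y, xy`
def lowCoeffs : R2 →ₗ[ℂ] Fin 4 → ℂ :=
  LinearMap.pi ![coeff (bideg 0 0), coeff (bideg 1 0), coeff (bideg 0 1), coeff (bideg 1 1)]

def lowPart (v : Fin 4 → ℂ) : R2 := v 0 • 1 + v 1 • Xv + v 2 • Yv + v 3 • (Xv * Yv)

lemma lowPart_eq_sum_monomial (v : Fin 4 → ℂ) :
    lowPart v = monomial (bideg 0 0) (v 0) + monomial (bideg 1 0) (v 1)
      + monomial (bideg 0 1) (v 2) + monomial (bideg 1 1) (v 3) := by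
  simp [lowPart, monomial_bideg, smul_eq_C_mul]

lemma lowCoeffs_apply_zero (v : R2) : lowCoeffs v 0 = constantCoeff v := by
  simp [lowCoeffs, bideg]

lemma lowCoeffs_lowPart (v : Fin 4 → ℂ) : lowCoeffs (lowPart v) = v := by
  ext i
  fin_cases i <;> simp [lowCoeffs, lowPart_eq_sum_monomial, coeff_bideg_monomial_bideg]

lemma lowCoeffs_mul_monomial (p : R2) {a b : ℕ} (hab : 2 ≤ a ∨ 2 ≤ b) :
    lowCoeffs (p * monomial (bideg a b) 1) = 0 := by
  classical
  ext i
  fin_cases i <;> simp [lowCoeffs, coeff_mul_monomial, bideg_le_iff] <;> omega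

lemma mem_span_sq_iff {f : R2} : f ∈ 𝔧 ↔ lowCoeffs f = 0 := by
  have hX : Xv ^ 2 = monomial (bideg 2 0) 1 := by simp [monomial_bideg]
  have hY : Yv ^ 2 = monomial (bideg 0 2) 1 := by simp [monomial_bideg]
  constructor
  · intro hf
    obtain ⟨p, q, rfl⟩ := Ideal.mem_span_pair.mp hf
    rw [map_add, hX, hY, lowCoeffs_mul_monomial p (by simp),
      lowCoeffs_mul_monomial q (by simp), add_zero]
  · intro hf
    simp only [lowCoeffs, funext_iff, Fin.forall_fin_succ] at hf
    have hsupp : ∀ m, coeff m f ≠ 0 → bideg 2 0 ≤ m ∨ bideg 0 2 ≤ m := by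
      intro m hm
      simp only [bideg_le_iff]
      by_contra! hsmall
      rw [← bideg_eta m] at hm
      have h0 : m 0 ≤ 1 := by omega
      have h1 : m 1 ≤ 1 := by omega
      interval_cases m 0 <;> interval_cases m 1 <;> simp_all
    obtain ⟨g, h, hfgh, -, -⟩ := exists_eq_monomial_mul_add_monomial_mul hsupp
    rw [hfgh, ← hX, ← hY]
    exact Ideal.add_mem _ (Ideal.mul_mem_right _ _ (Ideal.subset_span (Or.inl rfl)))
      (Ideal.mul_mem_right _ _ (Ideal.subset_span (Or.inr rfl)))

lemma lowCoeffs_surjective : Function.Surjective lowCoeffs :=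
  fun v => ⟨lowPart v, lowCoeffs_lowPart v⟩

lemma finrank_quotient_span_sq : Module.finrank ℂ (R2 ⧸ 𝔧) = 4 := by
  have hker : Submodule.restrictScalars ℂ 𝔧 = LinearMap.ker lowCoeffs := by
    ext f
    simp [mem_span_sq_iff]
  let e : (R2 ⧸ 𝔧) ≃ₗ[ℂ] (Fin 4 → ℂ) :=
    (Submodule.Quotient.restrictScalarsEquiv ℂ 𝔧).symm ≪≫ₗ
      Submodule.quotEquivOfEq _ _ hker ≪≫ₗ
      lowCoeffs.quotKerEquivOfSurjective lowCoeffs_surjective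
  rw [e.finrank_eq, Module.finrank_fin_fun]

section QuotientBySqIdeal

variable {I : Ideal R2}

lemma mk_eq_of_span_sq_le (hI : 𝔧 ≤ I) (w : R2) :
    Ideal.Quotient.mk I w = lowCoeffs w 0 • 1 + lowCoeffs w 1 • Ideal.Quotient.mk I Xv
      + lowCoeffs w 2 • Ideal.Quotient.mk I Yv
      + lowCoeffs w 3 • (Ideal.Quotient.mk I Xv * Ideal.Quotient.mk I Yv) := by
  have hsub : w - lowPart (lowCoeffs w) ∈ I :=
    hI (mem_span_sq_iff.mpr (by rw [map_sub, lowCoeffs_lowPart, sub_self]))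
  rw [Ideal.Quotient.eq.mpr hsub]
  simp only [lowPart, map_add]
  rfl

lemma ne_top_of_three_le_finrank (hdim : 3 ≤ Module.finrank ℂ (R2 ⧸ I)) : I ≠ ⊤ := by
  rintro rfl
  have : Subsingleton (R2 ⧸ (⊤ : Ideal R2)) := Ideal.Quotient.subsingleton_iff.mpr rfl
  rw [Module.finrank_zero_of_subsingleton] at hdim
  omega

lemma finrank_le_two_of_linear_relation (hI : 𝔧 ≤ I)
    (hxy : Ideal.Quotient.mk I Xv * Ideal.Quotient.mk I Yv = 0) {b c : ℂ} (hbc : b ≠ 0 ∨ c ≠ 0)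
    (hrel : b • Ideal.Quotient.mk I Xv + c • Ideal.Quotient.mk I Yv = 0) :
    Module.finrank ℂ (R2 ⧸ I) ≤ 2 := by
  refine finrank_le_two_of_span_eq_top (u := 1) (eq_top_iff.mpr fun z _ => ?_) hbc hrel
  obtain ⟨w, rfl⟩ := Ideal.Quotient.mk_surjective z
  rw [mk_eq_of_span_sq_le hI w, hxy, smul_zero, add_zero]
  exact add_mem (add_mem (Submodule.smul_mem _ _ (Submodule.subset_span ⟨0, rfl⟩))
    (Submodule.smul_mem _ _ (Submodule.subset_span ⟨1, rfl⟩)))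
    (Submodule.smul_mem _ _ (Submodule.subset_span ⟨2, rfl⟩))

lemma lowCoeffs_eq_zero_of_mem (hI : 𝔧 ≤ I) (hdim : 3 ≤ Module.finrank ℂ (R2 ⧸ I)) {v : R2}
    (hv : v ∈ I) : lowCoeffs v 0 = 0 ∧ lowCoeffs v 1 = 0 ∧ lowCoeffs v 2 = 0 := by
  have hconst : lowCoeffs v 0 = 0 := by
    rw [lowCoeffs_apply_zero]
    exact constantCoeff_eq_zero_of_mem_of_ne_top (ne_top_of_three_le_finrank hdim) hv
  refine ⟨hconst, ?_⟩
  have hrel := mk_eq_of_span_sq_le hI v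
  rw [Ideal.Quotient.eq_zero_iff_mem.mpr hv, hconst, zero_smul, zero_add] at hrel
  set x := Ideal.Quotient.mk I Xv
  set y := Ideal.Quotient.mk I Yv
  set b := lowCoeffs v 1
  set c := lowCoeffs v 2
  set d := lowCoeffs v 3
  have hx : x ^ 2 = 0 := Ideal.Quotient.eq_zero_iff_mem.mpr (hI (Ideal.subset_span (Or.inl rfl)))
  have hy : y ^ 2 = 0 := Ideal.Quotient.eq_zero_iff_mem.mpr (hI (Ideal.subset_span (Or.inr rfl)))
  -- `Algebra.smul_def` does not match the `SMul` instance of the quotient syntactically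
  have smul_def : ∀ (a : ℂ) (z : R2 ⧸ I), a • z = algebraMap ℂ _ a * z :=
    fun a z => Algebra.smul_def a z
  simp only [smul_def] at hrel
  -- multiplying the relation by `y`, resp. `x`, leaves only a multiple of `x * y`
  have hbxy : b • (x * y) = 0 := by
    rw [smul_def]
    linear_combination -(y * hrel) - algebraMap ℂ _ c * hy - algebraMap ℂ _ d * x * hy
  have hcxy : c • (x * y) = 0 := by
    rw [smul_def]
    linear_combination -(x * hrel) - algebraMap ℂ _ b * hx - algebraMap ℂ _ d * y * hx
  by_contra hbc
  have hbc' : b ≠ 0 ∨ c ≠ 0 := not_and_or.mp hbc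
  have hxy : x * y = 0 := by
    rcases hbc' with hb | hc
    exacts [(smul_eq_zero.mp hbxy).resolve_left hb, (smul_eq_zero.mp hcxy).resolve_left hc]
  have hlin : b • x + c • y = 0 := by
    rw [smul_def, smul_def]
    linear_combination -hrel - algebraMap ℂ _ d * hxy
  have := finrank_le_two_of_linear_relation hI hxy hbc' hlin
  omega

lemma mem_span_sq_of_X_mul_Y_not_mem (hI : 𝔧 ≤ I) (hXY : Xv * Yv ∉ I) {v : R2} (hv : v ∈ I)
    (hlow : lowCoeffs v 0 = 0 ∧ lowCoeffs v 1 = 0 ∧ lowCoeffs v 2 = 0) : v ∈ 𝔧 := by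
  have hrel := mk_eq_of_span_sq_le hI v
  rw [Ideal.Quotient.eq_zero_iff_mem.mpr hv, hlow.1, hlow.2.1, hlow.2.2, zero_smul, zero_smul,
    zero_smul, zero_add, zero_add, zero_add, ← map_mul, eq_comm, smul_eq_zero,
    Ideal.Quotient.eq_zero_iff_mem] at hrel
  refine mem_span_sq_iff.mpr (funext fun i => ?_)
  fin_cases i
  exacts [hlow.1, hlow.2.1, hlow.2.2, hrel.resolve_right hXY]

end QuotientBySqIdeal

lemma two_le_order_of_lowCoeffs {v : R2}
    (hlow : lowCoeffs v 0 = 0 ∧ lowCoeffs v 1 = 0 ∧ lowCoeffs v 2 = 0) : 2 ≤ v.order := by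
  refine le_order fun d hd => ?_
  have hd' : d 0 + d 1 < 2 := by rw [← degree_fin_two]; exact_mod_cast hd
  rw [← bideg_eta d]
  have h0 : d 0 ≤ 1 := by omega
  have h1 : d 1 ≤ 1 := by omega
  interval_cases d 0 <;> interval_cases d 1 <;> simp_all [lowCoeffs]

lemma linearIndependent_quadratic_monomials :
    LinearIndependent ℂ ![(monomial (bideg 2 0) 1 : R2), monomial (bideg 1 1) 1,
      monomial (bideg 0 2) 1] := by
  rw [Fintype.linearIndependent_iff]
  intro c hc i
  have hcoeff := fun a b => congrArg (coeff (bideg a b)) hc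
  simp [Fin.sum_univ_three, coeff_bideg_monomial_bideg] at hcoeff
  fin_cases i
  exacts [by simpa using hcoeff 2 0, by simpa using hcoeff 1 1, by simpa using hcoeff 0 2]

lemma X_mul_Y_not_mem_span_pair {g h : R2} (hg : 2 ≤ g.order) (hh : 2 ≤ h.order)
    (hX : Xv ^ 2 ∈ Ideal.span {g, h}) (hY : Yv ^ 2 ∈ Ideal.span {g, h}) :
    Xv * Yv ∉ Ideal.span {g, h} := by
  classical
  intro hXY
  set S := Submodule.span ℂ {homogeneousComponent 2 g, homogeneousComponent 2 h}
  have hquad : ∀ a b, a + b = 2 → Xv ^ a * Yv ^ b ∈ Ideal.span {g, h} →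
      (monomial (bideg a b) 1 : R2) ∈ S := by
    intro a b hab hmem
    have := homogeneousComponent_mem_span_of_mem_span_pair hg hh hmem
    rwa [← one_mul (Xv ^ a * Yv ^ b), ← map_one C, ← monomial_bideg,
      homogeneousComponent_monomial_of_degree_eq _ (by simpa [degree_fin_two] using hab)] at this
  have hle : Submodule.span ℂ (Set.range ![(monomial (bideg 2 0) 1 : R2),
      monomial (bideg 1 1) 1, monomial (bideg 0 2) 1]) ≤ S := by
    rw [Submodule.span_le]
    rintro _ ⟨i, rfl⟩
    fin_cases i
    · exact hquad 2 0 rfl (by simpa using hX)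
    · exact hquad 1 1 rfl (by simpa using hXY)
    · exact hquad 0 2 rfl (by simpa using hY)
  have : FiniteDimensional ℂ S := FiniteDimensional.span_of_finite ℂ (Set.toFinite _)
  have h3 := Submodule.finrank_mono hle
  rw [finrank_span_eq_card linearIndependent_quadratic_monomials] at h3
  have h2 : Module.finrank ℂ S ≤ 2 := by
    refine (finrank_span_le_card _).trans ?_
    rw [Set.toFinset_insert, Set.toFinset_singleton]
    exact Finset.card_le_two
  simp at h3
  omega

theorem statement3 (f : R2) (g h : R2) (I : Ideal R2)
    (hjet : f - (Xv ^ 3 - Yv ^ 3) ∈ mR2 ^ 4)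
    (hI : I = Ideal.span {g, h})
    (hdx : pd 0 f ∈ I) (hdy : pd 1 f ∈ I) (hm3 : mR2 ^ 3 ≤ I)
    (hdim : 3 ≤ Module.finrank ℂ (R2 ⧸ I)) :
    (∃ φ : R2 ≃ₐ[ℂ] R2,
      Ideal.map (φ : R2 →+* R2) I = Ideal.span {Xv ^ 2, Yv ^ 2}) ∧
    Module.finrank ℂ (R2 ⧸ I) = 4 := by
  obtain ⟨hX, hY⟩ := X_sq_mem_and_Y_sq_mem hjet hdx hdy hm3
  have hJI : 𝔧 ≤ I := Ideal.span_le.mpr (Set.insert_subset_iff.mpr ⟨hX, by simpa using hY⟩)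
  have hg : g ∈ I := hI ▸ Ideal.subset_span (Or.inl rfl)
  have hh : h ∈ I := hI ▸ Ideal.subset_span (Or.inr rfl)
  have hglow := lowCoeffs_eq_zero_of_mem hJI hdim hg
  have hhlow := lowCoeffs_eq_zero_of_mem hJI hdim hh
  have hXY : Xv * Yv ∉ I := by
    rw [hI] at hX hY ⊢
    exact X_mul_Y_not_mem_span_pair (two_le_order_of_lowCoeffs hglow)
      (two_le_order_of_lowCoeffs hhlow) hX hY
  have hIJ : I = 𝔧 := by
    refine le_antisymm ?_ hJI
    rw [hI, Ideal.span_le, Set.insert_subset_iff, Set.singleton_subset_iff]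
    exact ⟨mem_span_sq_of_X_mul_Y_not_mem hJI hXY hg hglow,
      mem_span_sq_of_X_mul_Y_not_mem hJI hXY hh hhlow⟩
  exact ⟨⟨AlgEquiv.refl, by rw [hIJ]; exact Ideal.map_id _⟩, hIJ ▸ finrank_quotient_span_sq⟩

end
end

section
/- Let A, B be divisor classes on a smooth projective surface S with (A+B)² ≥ 17, A·B ≤ 4 and A·B ≥ B² + 1, and B² > 0, and assume the Hodge index inequality (A·B)² ≥ A²·B² holds (which it does since A² > 0). Then B² ≤ 2, and if B² ∈ {1,2} then A·B = 4. -/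
/-! The Hodge index inequality `(A·B)² ≥ A²·B²` is played off against the lower bound
`A² = (A+B)² - 2 A·B - B² ≥ 17 - 2 A·B - B²`. If `B² ≥ 3` then `A·B = 4` and `B² = 3`, so
`3 A² ≥ 18 > 16`; if `B² ∈ {1, 2}` and `A·B ≤ 3`, then `9 ≥ (11 - B²) B²` fails. -/

theorem pairing_add_add_self {M R : Type*} [Add M] [CommSemiring R] (i : M → M → R)
    (isymm : ∀ a b, i a b = i b a) (iaddl : ∀ a b c, i (a + b) c = i a c + i b c) (a b : M) :
    i (a + b) (a + b) = i a a + 2 * i a b + i b b := by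
  rw [iaddl, isymm a, isymm b, iaddl, iaddl, isymm b a]
  ring

section HodgeIndex

variable {a2 ab b2 : ℤ} (hsum : 17 ≤ a2 + 2 * ab + b2) (hab : ab ≤ 4) (hbb : b2 + 1 ≤ ab)
  (hodge : a2 * b2 ≤ ab ^ 2)
include hsum hab hbb hodge

theorem le_two_of_hodge_index : b2 ≤ 2 := by
  by_contra! hb
  have hb3 : b2 = 3 := by omega
  have hab4 : ab = 4 := by omega
  subst hb3 hab4
  omega

theorem eq_four_of_hodge_index (hb : b2 = 1 ∨ b2 = 2) : ab = 4 := by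
  by_contra hab4
  have hab3 : ab ≤ 3 := by omega
  rcases hb with rfl | rfl <;> interval_cases ab <;> omega

end HodgeIndex

theorem statement6_general (Div : Type) [AddCommGroup Div]
    (i : Div → Div → ℤ)
    (isymm : ∀ a b, i a b = i b a)
    (iaddl : ∀ a b c, i (a + b) c = i a c + i b c)
    (A B : Div)
    (hample : 17 ≤ i (A + B) (A + B))        -- (A+B)² ≥ 17, i.e. (L−K)² > 16
    (hAB4 : i A B ≤ 4)                        -- A·B ≤ length(Z'_p) ≤ 4
    (hABB : i B B + 1 ≤ i A B)                -- A·B ≥ B² + 1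
    (hodge : i A A * i B B ≤ (i A B) ^ 2) :   -- Hodge index inequality
    i B B ≤ 2 ∧ ((i B B = 1 ∨ i B B = 2) → i A B = 4) := by
  rw [pairing_add_add_self i isymm iaddl] at hample
  exact ⟨le_two_of_hodge_index hample hAB4 hABB hodge,
    eq_four_of_hodge_index hample hAB4 hABB hodge⟩

theorem statement6 (Div : Type) [AddCommGroup Div]
    (i : Div → Div → ℤ)
    (isymm : ∀ a b, i a b = i b a)
    (iaddl : ∀ a b c, i (a + b) c = i a c + i b c)
    (A B : Div)
    (hample : 17 ≤ i (A + B) (A + B))        -- (A+B)² ≥ 17, i.e. (L−K)² > 16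
    (hAB4 : i A B ≤ 4)                        -- A·B ≤ length(Z'_p) ≤ 4
    (hABB : i B B + 1 ≤ i A B)                -- A·B ≥ B² + 1
    (hBpos : 0 < i B B)                       -- B² > 0
    (hodge : i A A * i B B ≤ (i A B) ^ 2) :   -- Hodge index inequality
    i B B ≤ 2 ∧ ((i B B = 1 ∨ i B B = 2) → i A B = 4) :=
  statement6_general Div i isymm iaddl A B hample hAB4 hABB hodge
end
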